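/- Let ι be a finite index type with decidable equality, let γ : ι → Type be a family of finite types with decidable equality, let n > 0, let d : Fin n → (Π i, γ i) be a data sample, and let y : Fin n → β for a finite type β with decidable equality, with empirical entropy Ĥ(y) > 0. For S ⊆ ι write x_S for the restriction of the sample to the attributes in S. Then for all subsets S ⊆ S' ⊆ ι, the reliable fraction of information of the superset is bounded by the optimistic estimator of the subset: F̂₀(x_{S'}; y) ≤ 1 − m̂₀(x_S, y)/Ĥ(y). -/

import Mathlib

open Finset

/-- Empirical mutual information between `x : Fin n → α` and `y : Fin n → β`,
`Î(x,y) = Σ_{v,w} (c(v,w)/n)·log(c(v,w)·n/(a(v)·b(w)))`, terms with `c(v,w)=0` being `0`. -/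
noncomputable def empMI {n : ℕ} {α β : Type*} [Fintype α] [DecidableEq α]
    [Fintype β] [DecidableEq β] (x : Fin n → α) (y : Fin n → β) : ℝ :=
  ∑ v : α, ∑ w : β,
    (((univ.filter fun t => x t = v ∧ y t = w).card : ℝ) / n) *
      Real.log ((((univ.filter fun t => x t = v ∧ y t = w).card : ℝ) * n) /
        (((univ.filter fun t => x t = v).card : ℝ) *
          ((univ.filter fun t => y t = w).card : ℝ)))

/-- Permutation-model expectation of the empirical mutual information:
`m̂₀(x,y) = (1/n!)·Σ_{σ ∈ Perm(Fin n)} Î(x, y∘σ)`. -/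
noncomputable def permExpMI {n : ℕ} {α β : Type*} [Fintype α] [DecidableEq α]
    [Fintype β] [DecidableEq β] (x : Fin n → α) (y : Fin n → β) : ℝ :=
  (1 / (n.factorial : ℝ)) * ∑ σ : Equiv.Perm (Fin n), empMI x (y ∘ σ)

/-- Empirical entropy `Ĥ(y) = −Σ_w (b(w)/n)·log(b(w)/n)`, terms with `b(w)=0` being `0`. -/
noncomputable def empEntropy {n : ℕ} {β : Type*} [Fintype β] [DecidableEq β]
    (y : Fin n → β) : ℝ :=
  -∑ w : β, (((univ.filter fun t => y t = w).card : ℝ) / n) *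
      Real.log (((univ.filter fun t => y t = w).card : ℝ) / n)

/-- Restriction `x_S` of the sample `d` to the attributes in `S`. -/
def restrictSample {ι : Type*} {γ : ι → Type*} {n : ℕ} (d : Fin n → ∀ i, γ i)
    (S : Finset ι) : Fin n → (∀ i : S, γ i) := fun t i => d t i

/-! Restricting to a smaller attribute set is a coarsening `x_S = f ∘ x_{S'}` of the sample, and
empirical mutual information can only decrease under coarsening (the data-processing inequality,
a consequence of the log-sum inequality). Averaging over permutations,
`m̂₀(x_S, y) ≤ m̂₀(x_{S'}, y)`. Together with `Î(x_{S'}, y) ≤ Ĥ(y)` this gives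
`Î(x_{S'}, y) - m̂₀(x_{S'}, y) ≤ Ĥ(y) - m̂₀(x_S, y)`. -/

open Real

theorem Real.sum_mul_log_div_sum_le_sum_mul_log_div {ι : Type*} (s : Finset ι) {f g : ι → ℝ}
    (hf : ∀ i ∈ s, 0 ≤ f i) (hg : ∀ i ∈ s, 0 ≤ g i) (hfg : ∀ i ∈ s, g i = 0 → f i = 0) :
    (∑ i ∈ s, f i) * log ((∑ i ∈ s, f i) / ∑ i ∈ s, g i) ≤
      ∑ i ∈ s, f i * log (f i / g i) := by
  set F := ∑ i ∈ s, f i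
  set G := ∑ i ∈ s, g i
  rcases (sum_nonneg hg).eq_or_lt with hG | hG
  · have hf0 : ∀ i ∈ s, f i = 0 := fun i hi =>
      hfg i hi ((sum_eq_zero_iff_of_nonneg hg).1 hG.symm i hi)
    rw [show F = 0 from sum_eq_zero hf0, zero_mul]
    exact (sum_eq_zero fun i hi => by simp [hf0 i hi]).ge
  -- Jensen for the convex function `t ↦ t log t`, at the points `f i / g i` with weights `g i / G`.
  have jensen := convexOn_mul_log.map_sum_le (t := s) (w := fun i => g i / G)
    (p := fun i => f i / g i) (fun i hi => div_nonneg (hg i hi) hG.le)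
    (by rw [← sum_div, div_self hG.ne']) (fun i hi => div_nonneg (hf i hi) (hg i hi))
  have hmean : ∑ i ∈ s, (g i / G) • (f i / g i) = F / G := by
    rw [sum_div]
    refine sum_congr rfl fun i hi => ?_
    rcases eq_or_ne (g i) 0 with hgi | hgi
    · simp [hgi, hfg i hi hgi]
    · simp only [smul_eq_mul]
      field_simp
  have hterm : ∀ i ∈ s, (g i / G) • (f i / g i * log (f i / g i)) = f i * log (f i / g i) / G := by
    intro i hi
    rcases eq_or_ne (g i) 0 with hgi | hgi
    · simp [hgi, hfg i hi hgi]
    · simp only [smul_eq_mul]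
      field_simp
  rw [hmean, sum_congr rfl hterm, ← sum_div] at jensen
  calc F * log (F / G) = G * (F / G * log (F / G)) := by
        rw [← mul_assoc, mul_div_cancel₀ _ hG.ne']
    _ ≤ G * ((∑ i ∈ s, f i * log (f i / g i)) / G) := by gcongr
    _ = ∑ i ∈ s, f i * log (f i / g i) := mul_div_cancel₀ _ hG.ne'

section Counts

variable {n : ℕ} {α α₂ β : Type*} [DecidableEq α] [DecidableEq α₂] [DecidableEq β]

def empCount (x : Fin n → α) (v : α) : ℕ := #{t | x t = v}

def empJointCount (x : Fin n → α) (y : Fin n → β) (v : α) (w : β) : ℕ := #{t | x t = v ∧ y t = w}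

variable (x : Fin n → α) (y : Fin n → β)

theorem empJointCount_le_empCount_left (v : α) (w : β) :
    empJointCount x y v w ≤ empCount x v :=
  card_le_card fun _ ht => by simp_all

theorem empJointCount_le_empCount_right (v : α) (w : β) :
    empJointCount x y v w ≤ empCount y w :=
  card_le_card fun _ ht => by simp_all

theorem empJointCount_le_card (v : α) (w : β) : empJointCount x y v w ≤ n :=
  (card_le_univ _).trans_eq (Fintype.card_fin n)

theorem pos_of_empJointCount_pos {v : α} {w : β} (hc : 0 < empJointCount x y v w) :
    0 < empCount x v ∧ 0 < empCount y w ∧ 0 < n :=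
  ⟨hc.trans_le (empJointCount_le_empCount_left x y v w),
    hc.trans_le (empJointCount_le_empCount_right x y v w),
    hc.trans_le (empJointCount_le_card x y v w)⟩

theorem sum_empJointCount_left [Fintype α] (w : β) :
    ∑ v, empJointCount x y v w = empCount y w := by
  rw [empCount, card_eq_sum_card_fiberwise (f := x) (t := univ) fun _ _ => mem_univ _]
  simp only [empJointCount, filter_filter, and_comm]

theorem empCount_comp [Fintype α] (f : α → α₂) (u : α₂) :
    empCount (f ∘ x) u = ∑ v with f v = u, empCount x v := by
  rw [empCount, card_eq_sum_card_fiberwise (f := x) (t := {v | f v = u}) fun _ => by simp]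
  refine sum_congr rfl fun v hv => ?_
  rw [filter_filter, empCount]
  congr 1 with t
  grind

theorem empJointCount_comp [Fintype α] (f : α → α₂) (u : α₂) (w : β) :
    empJointCount (f ∘ x) y u w = ∑ v with f v = u, empJointCount x y v w := by
  rw [empJointCount,
    card_eq_sum_card_fiberwise (f := x) (t := {v | f v = u}) fun _ h => by simp_all]
  refine sum_congr rfl fun v hv => ?_
  rw [filter_filter, empJointCount]
  congr 1 with t
  grind

theorem empMI_summand_le (v : α) (w : β) :
    (empJointCount x y v w / n : ℝ) *
        log (empJointCount x y v w * n / (empCount x v * empCount y w)) ≤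
      (empJointCount x y v w / n : ℝ) * log (n / empCount y w) := by
  set c := empJointCount x y v w
  rcases Nat.eq_zero_or_pos c with hc | hc
  · simp [hc]
  obtain ⟨ha, hb, hn⟩ := pos_of_empJointCount_pos x y hc
  have hca : (c / empCount x v : ℝ) ≤ 1 :=
    div_le_one_of_le₀ (by exact_mod_cast empJointCount_le_empCount_left x y v w) (by positivity)
  refine mul_le_mul_of_nonneg_left (log_le_log (by positivity) ?_) (by positivity)
  calc (c * n / (empCount x v * empCount y w) : ℝ) = c / empCount x v * (n / empCount y w) := by
        rw [div_mul_div_comm]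
    _ ≤ n / empCount y w := mul_le_of_le_one_left (by positivity) hca

end Counts

section Information

variable {n : ℕ} {α α₂ β : Type*} [Fintype α] [DecidableEq α] [Fintype α₂] [DecidableEq α₂]
  [Fintype β] [DecidableEq β]

theorem empMI_eq_sum (x : Fin n → α) (y : Fin n → β) :
    empMI x y = ∑ v, ∑ w, (empJointCount x y v w / n : ℝ) *
      log (empJointCount x y v w * n / (empCount x v * empCount y w)) :=
  rfl

theorem empEntropy_eq_sum (y : Fin n → β) :
    empEntropy y = -∑ w, (empCount y w / n : ℝ) * log (empCount y w / n) :=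
  rfl

theorem empMI_le_empEntropy (x : Fin n → α) (y : Fin n → β) : empMI x y ≤ empEntropy y := by
  rw [empMI_eq_sum, empEntropy_eq_sum, sum_comm, ← sum_neg_distrib]
  gcongr with w
  calc _ ≤ ∑ v, (empJointCount x y v w / n : ℝ) * log (n / empCount y w) :=
        sum_le_sum fun v _ => empMI_summand_le x y v w
    _ = (empCount y w / n : ℝ) * log (n / empCount y w) := by
        rw [← sum_mul, ← sum_div]
        exact_mod_cast congrArg (fun m : ℕ => (m / n : ℝ) * log (n / empCount y w))
          (sum_empJointCount_left x y w)
    _ = _ := by rw [← inv_div (empCount y w : ℝ), log_inv, mul_neg]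

theorem empMI_comp_le (f : α → α₂) (x : Fin n → α) (y : Fin n → β) :
    empMI (f ∘ x) y ≤ empMI x y := by
  rw [empMI_eq_sum, empMI_eq_sum, ← sum_fiberwise univ f]
  gcongr with u
  rw [sum_comm]
  gcongr with w
  -- each summand is `n⁻¹ * (c * log (c / g))` with `g = a * b / n`: the log-sum shape
  have hscale (c a b : ℝ) :
      c / n * log (c * n / (a * b)) = (n : ℝ)⁻¹ * (c * log (c / (a * b / n))) := by
    rw [div_div_eq_mul_div]; ring
  rw [empJointCount_comp, empCount_comp]
  push_cast
  simp only [hscale]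
  rw [← mul_sum, sum_mul _ _ (empCount y w : ℝ), sum_div _ _ (n : ℝ)]
  gcongr
  refine Real.sum_mul_log_div_sum_le_sum_mul_log_div _ (fun _ _ => by positivity)
    (fun _ _ => by positivity) fun v _ hg => ?_
  by_contra hc
  obtain ⟨ha, hb, hn⟩ := pos_of_empJointCount_pos x y (Nat.pos_of_ne_zero (by exact_mod_cast hc))
  exact (by positivity : (0 : ℝ) < _).ne' hg

theorem permExpMI_comp_le (f : α → α₂) (x : Fin n → α) (y : Fin n → β) :
    permExpMI (f ∘ x) y ≤ permExpMI x y := by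
  unfold permExpMI
  gcongr with σ
  exact empMI_comp_le f x (y ∘ σ)

end Information

theorem restrictSample_eq_comp {ι : Type*} {γ : ι → Type*} {n : ℕ} (d : Fin n → ∀ i, γ i)
    {S S' : Finset ι} (h : S ⊆ S') :
    restrictSample d S =
      (fun (p : ∀ i : S', γ i) (i : S) => p ⟨i.1, h i.2⟩) ∘ restrictSample d S' :=
  rfl

theorem reliableFraction_le_optimistic_general {ι : Type*} [DecidableEq ι]
    {γ : ι → Type*} [∀ i, Fintype (γ i)] [∀ i, DecidableEq (γ i)]
    {n : ℕ} (d : Fin n → ∀ i, γ i)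
    {β : Type*} [Fintype β] [DecidableEq β] (y : Fin n → β) (hH : 0 < empEntropy y)
    (S S' : Finset ι) (hSS' : S ⊆ S') :
    (empMI (restrictSample d S') y - permExpMI (restrictSample d S') y) / empEntropy y ≤
      1 - permExpMI (restrictSample d S) y / empEntropy y := by
  have hbound := empMI_le_empEntropy (restrictSample d S') y
  have hmono : permExpMI (restrictSample d S) y ≤ permExpMI (restrictSample d S') y := by
    rw [restrictSample_eq_comp d hSS']
    exact permExpMI_comp_le _ _ y
  rw [div_le_iff₀ hH, sub_mul, div_mul_cancel₀ _ hH.ne', one_mul]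
  linarith

/-- For attribute sets `S ⊆ S'`, the reliable fraction of information of the superset is
bounded by the optimistic estimator of the subset:
`F̂₀(x_{S'}; y) ≤ 1 − m̂₀(x_S, y)/Ĥ(y)`. -/
theorem reliableFraction_le_optimistic {ι : Type*} [Fintype ι] [DecidableEq ι]
    {γ : ι → Type*} [∀ i, Fintype (γ i)] [∀ i, DecidableEq (γ i)]
    {n : ℕ} (hn : 0 < n) (d : Fin n → ∀ i, γ i)
    {β : Type*} [Fintype β] [DecidableEq β] (y : Fin n → β) (hH : 0 < empEntropy y)
    (S S' : Finset ι) (hSS' : S ⊆ S') :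
    (empMI (restrictSample d S') y - permExpMI (restrictSample d S') y) / empEntropy y ≤
      1 - permExpMI (restrictSample d S) y / empEntropy y :=
  reliableFraction_le_optimistic_general d y hH S S' hSS'
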